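/- (Distance formula (4.16), segment QE in the truncated orthoscheme) Assume B < 0 and sin²(π/u) < cos²(π/v) (the vertex A₃ is an outer point, so a₃₃ > 0). Let q = a₂ − (a₂₃/a₃₃)·a₃ and e = a₁ − (a₁₃/a₃₃)·a₃ be the vectors of the truncation points Q = pol(A₃) ∩ A₃A₂ and E = pol(A₃) ∩ A₃A₁. Then ⟨q,q⟩ < 0, ⟨e,e⟩ < 0, and −⟨q, e⟩/√(⟨q,q⟩·⟨e,e⟩) = cos(π/v)/sin(π/u). (This quantity is cosh of the hyperbolic distance between the points Q and E.) -/

import Mathlib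

open Real Matrix

/-- The Coxeter–Schläfli matrix of the complete orthoscheme `W_{uvw}`. -/
noncomputable def CSmatrix (u v w : ℝ) : Matrix (Fin 4) (Fin 4) ℝ :=
  !![1, -cos (π/u), 0, 0;
     -cos (π/u), 1, -cos (π/v), 0;
     0, -cos (π/v), 1, -cos (π/w);
     0, 0, -cos (π/w), 1]

/-- The inverse of the Coxeter–Schläfli matrix; its entries are the `a_{ij}`. -/
noncomputable def CSinv (u v w : ℝ) : Matrix (Fin 4) (Fin 4) ℝ :=
  (CSmatrix u v w)⁻¹

/-! Subtracting the `a₃`-component makes `q` and `e` orthogonal to `a₃`, so their Gram matrix is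
the Schur complement of `a₃₃` in `b⁻¹`, i.e. the inverse of the principal `{0,1,2}` block of `b`.
That block has determinant `S = 1 - cos²(π/u) - cos²(π/v) = sin²(π/u) - cos²(π/v) < 0`, whence
`a₃₃ = S/B > 0`, `⟨q,q⟩ = sin²(π/u)/S`, `⟨e,e⟩ = 1/S` and `⟨q,e⟩ = cos(π/v)/S`. -/

theorem LinearMap.BilinForm.apply_sub_proj_sub_proj {V : Type*} [AddCommGroup V] [Module ℝ V]
    (B : LinearMap.BilinForm ℝ V) (x y z : V) (hz : B z z ≠ 0) :
    B (x - (B x z / B z z) • z) (y - (B y z / B z z) • z) = B x y - B x z * B z y / B z z := by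
  simp only [map_sub, map_smul, LinearMap.sub_apply, LinearMap.smul_apply, smul_eq_mul]
  field_simp
  ring

section CoxeterSchlafli

variable (u v w : ℝ)

noncomputable def CSadj : Matrix (Fin 4) (Fin 4) ℝ :=
  let x := cos (π/u); let y := cos (π/v); let z := cos (π/w)
  !![1-y^2-z^2, x*(1-z^2), x*y, x*y*z;
     x*(1-z^2), 1-z^2, y, y*z;
     x*y, y, 1-x^2, z*(1-x^2);
     x*y*z, y*z, z*(1-x^2), 1-x^2-y^2]

theorem CSmatrix_det :
    (CSmatrix u v w).det = (1 - cos (π/u)^2) * (1 - cos (π/w)^2) - cos (π/v)^2 := by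
  simp [CSmatrix, Matrix.det_succ_row_zero, Fin.sum_univ_succ, Fin.succAbove]
  ring

theorem CSmatrix_mul_CSadj : CSmatrix u v w * CSadj u v w = (CSmatrix u v w).det • 1 := by
  rw [CSmatrix_det]
  ext i j
  fin_cases i <;> fin_cases j <;>
    simp [CSmatrix, CSadj, Matrix.mul_apply, Fin.sum_univ_succ] <;> ring

variable {u v w}

theorem CSinv_apply (hdet : (CSmatrix u v w).det ≠ 0) (i j : Fin 4) :
    CSinv u v w i j = (CSmatrix u v w).det⁻¹ * CSadj u v w i j := by
  have hright : CSmatrix u v w * ((CSmatrix u v w).det⁻¹ • CSadj u v w) = 1 := by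
    rw [Matrix.mul_smul, CSmatrix_mul_CSadj, smul_smul, inv_mul_cancel₀ hdet, one_smul]
  rw [CSinv, Matrix.inv_eq_right_inv hright, Matrix.smul_apply, smul_eq_mul]

section Schur

variable (hdet : (CSmatrix u v w).det ≠ 0) (hS : 1 - cos (π/u)^2 - cos (π/v)^2 ≠ 0)
include hdet

theorem CSinv_three_three :
    CSinv u v w 3 3 = (1 - cos (π/u)^2 - cos (π/v)^2) / (CSmatrix u v w).det := by
  rw [CSinv_apply hdet]
  simp [CSadj, div_eq_inv_mul]

include hS

theorem CSinv_schur_two_two :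
    CSinv u v w 2 2 - CSinv u v w 2 3 * CSinv u v w 3 2 / CSinv u v w 3 3
      = (1 - cos (π/u)^2) / (1 - cos (π/u)^2 - cos (π/v)^2) := by
  simp only [CSinv_apply hdet, CSadj, of_apply, cons_val', cons_val, cons_val_fin_one, cons_val_one,
    cons_val_zero]
  field_simp
  rw [CSmatrix_det]
  ring

theorem CSinv_schur_one_one :
    CSinv u v w 1 1 - CSinv u v w 1 3 * CSinv u v w 3 1 / CSinv u v w 3 3
      = 1 / (1 - cos (π/u)^2 - cos (π/v)^2) := by
  simp only [CSinv_apply hdet, CSadj, of_apply, cons_val', cons_val, cons_val_fin_one, cons_val_one,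
    cons_val_zero]
  field_simp
  rw [CSmatrix_det]
  ring

theorem CSinv_schur_two_one :
    CSinv u v w 2 1 - CSinv u v w 2 3 * CSinv u v w 3 1 / CSinv u v w 3 3
      = cos (π/v) / (1 - cos (π/u)^2 - cos (π/v)^2) := by
  simp only [CSinv_apply hdet, CSadj, of_apply, cons_val', cons_val, cons_val_fin_one, cons_val_one,
    cons_val_zero]
  field_simp
  rw [CSmatrix_det]
  ring

end Schur

end CoxeterSchlafli

theorem neg_div_sqrt_mul_of_neg {S s y : ℝ} (hS : S < 0) (hs : 0 < s) :
    -(y / S) / √(s ^ 2 / S * (1 / S)) = y / s := by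
  have hsq : s ^ 2 / S * (1 / S) = (s / -S) ^ 2 := by
    field_simp
  rw [hsq, Real.sqrt_sq (div_nonneg hs.le (neg_nonneg.mpr hS.le))]
  field_simp
  exact mul_div_cancel_right₀ y hS.ne

theorem stmt19_general (u v w : ℝ) (hu : 3 ≤ u)
    {V : Type*} [AddCommGroup V] [Module ℝ V]
    (Bf : LinearMap.BilinForm ℝ V)
    (a : Fin 4 → V)
    (hGram : ∀ i j : Fin 4, Bf (a i) (a j) = CSinv u v w i j)
    (hBneg : (CSmatrix u v w).det < 0)
    (h1 : sin (π/u) ^ 2 < cos (π/v) ^ 2)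
    (q e : V)
    (hq : q = a 2 - (CSinv u v w 2 3 / CSinv u v w 3 3) • a 3)
    (he : e = a 1 - (CSinv u v w 1 3 / CSinv u v w 3 3) • a 3) :
    0 < CSinv u v w 3 3 ∧ Bf q q < 0 ∧ Bf e e < 0 ∧
    -Bf q e / Real.sqrt (Bf q q * Bf e e) = cos (π/v) / sin (π/u) := by
  have hsin : 0 < sin (π/u) := sin_pos_of_pos_of_lt_pi (by positivity) <| by
    rw [div_lt_iff₀ (by linarith)]; nlinarith [pi_pos]
  have hsin_sq : sin (π/u) ^ 2 = 1 - cos (π/u) ^ 2 := sin_sq _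
  have hS : 1 - cos (π/u)^2 - cos (π/v)^2 < 0 := by linarith
  have h33 : 0 < CSinv u v w 3 3 := by
    rw [CSinv_three_three hBneg.ne]; exact div_pos_of_neg_of_neg hS hBneg
  simp only [← hGram] at hq he h33
  have hqq := CSinv_schur_two_two hBneg.ne hS.ne
  have hee := CSinv_schur_one_one hBneg.ne hS.ne
  have hqe := CSinv_schur_two_one hBneg.ne hS.ne
  simp only [← hGram, ← Bf.apply_sub_proj_sub_proj _ _ _ h33.ne', ← hq, ← he] at hqq hee hqe
  rw [← hsin_sq] at hqq hee hqe hS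
  refine ⟨hGram 3 3 ▸ h33, ?_, ?_, ?_⟩
  · rw [hqq]; exact div_neg_of_pos_of_neg (by positivity) hS
  · rw [hee]; exact div_neg_of_pos_of_neg one_pos hS
  · rw [hqq, hee, hqe]
    exact neg_div_sqrt_mul_of_neg hS hsin

theorem stmt19 (u v w : ℝ) (hu : 3 ≤ u) (hv : 3 ≤ v) (hw : 3 ≤ w)
    (hdet : (CSmatrix u v w).det ≠ 0)
    {V : Type*} [AddCommGroup V] [Module ℝ V]
    (Bf : LinearMap.BilinForm ℝ V)
    (hsymm : ∀ x y : V, Bf x y = Bf y x)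
    (a : Fin 4 → V)
    (hGram : ∀ i j : Fin 4, Bf (a i) (a j) = CSinv u v w i j)
    (hBneg : (CSmatrix u v w).det < 0)
    (h1 : sin (π/u) ^ 2 < cos (π/v) ^ 2)
    (q e : V)
    (hq : q = a 2 - (CSinv u v w 2 3 / CSinv u v w 3 3) • a 3)
    (he : e = a 1 - (CSinv u v w 1 3 / CSinv u v w 3 3) • a 3) :
    0 < CSinv u v w 3 3 ∧ Bf q q < 0 ∧ Bf e e < 0 ∧
    -Bf q e / Real.sqrt (Bf q q * Bf e e) = cos (π/v) / sin (π/u) :=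
  stmt19_general u v w hu Bf a hGram hBneg h1 q e hq he
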